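/- arXiv:1108.4378 — 3 statements merged into one kernel-verified Lean document; each statement's English description precedes it below -/
import Mathlib

section
/- For a symplectic dg-manifold of grade n > 0 with symplectic form ω and homological vector field v (satisfying 𝐝ω = 0 and L_v ω = 0 and [v,ε] = v where ε is the Euler vector field), the function π := (1/(n+1))·ι_ε ι_v ω is a Hamiltonian for v, i.e. 𝐝π = ι_v ω. -/
/-!
Since ω is closed, Cartan's formula for the Euler field gives `𝐝 (ι_ε ω) = L_ε ω = n ω`, and
`L_v ω = 0` turns `[L_v, ι_ε] = ι_{[v,ε]}` into `L_v (ι_ε ω) = -ι_v ω`. Cartan's formula for `v`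
applied to `ι_ε ω` then yields `𝐝 (ι_v ι_ε ω) = n ι_v ω + ι_v ω = (n + 1) ι_v ω`.
-/

section CartanCalculus

variable {R M : Type*}

theorem map_contract_eq_lie_of_closed [Semiring R] [AddCommMonoid M] [Module R M]
    {d ι L : M →ₗ[R] M} {x : M} (hL : L x = ι (d x) + d (ι x)) (hx : d x = 0) :
    d (ι x) = L x := by
  rw [hL, hx, map_zero, zero_add]

variable [Ring R] [AddCommGroup M] [Module R M]

theorem lie_contract_eq_neg_of_lie_eq_zero {L ι ι' : M →ₗ[R] M} {x : M}
    (hComm : L (ι x) - ι (L x) = -ι' x) (hx : L x = 0) : L (ι x) = -ι' x := by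
  rwa [hx, map_zero, sub_zero] at hComm

theorem map_contract_eq_add_one_smul {d ι L : M →ₗ[R] M} {x y : M} {c : R}
    (hCartan : d (ι y) = ι (d y) - L y) (hdy : d y = c • x) (hLy : L y = -ι x) :
    d (ι y) = (c + 1) • ι x := by
  rw [hCartan, hdy, hLy, map_smul, sub_neg_eq_add, add_smul, one_smul]

end CartanCalculus

theorem hamiltonian_of_homological_vector_field_general {Ω : Type*} [AddCommGroup Ω] [Module ℝ Ω]
    (d ιε ιv Lv Lε : Ω →ₗ[ℝ] Ω) (ω : Ω) (n : ℕ)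
    (hLε : ∀ x, Lε x = ιε (d x) + d (ιε x))
    (hgrade : Lε ω = (n : ℝ) • ω)
    (hclosed : d ω = 0)
    (hLvω : Lv ω = 0)
    (hCartan : ∀ x, d (ιv x) = ιv (d x) - Lv x)
    (hComm : ∀ x, Lv (ιε x) - ιε (Lv x) = - ιv x)
    (hswap : ιε (ιv ω) = ιv (ιε ω)) :
    d (((n : ℝ) + 1)⁻¹ • ιε (ιv ω)) = ιv ω := by
  have hdιε : d (ιε ω) = (n : ℝ) • ω :=
    (map_contract_eq_lie_of_closed (hLε ω) hclosed).trans hgrade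
  have hLvιε : Lv (ιε ω) = -ιv ω := lie_contract_eq_neg_of_lie_eq_zero (hComm ω) hLvω
  have hdπ : d (ιε (ιv ω)) = ((n : ℝ) + 1) • ιv ω := by
    rw [hswap]
    exact map_contract_eq_add_one_smul (hCartan _) hdιε hLvιε
  rw [map_smul, hdπ, inv_smul_smul₀ (by positivity)]

/-- For a symplectic dg-manifold of grade n > 0 with symplectic form ω and
homological vector field v, the function π := (1/(n+1))·ι_ε ι_v ω is a
Hamiltonian for v: 𝐝π = ι_v ω.  The graded Cartan calculus identities
L_ε = [ι_ε, 𝐝], L_v = [ι_v, 𝐝] and [L_v, ι_ε] = ι_{[v,ε]} (with [v,ε] = ∓v)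
are given as hypotheses on the operators. -/
theorem hamiltonian_of_homological_vector_field {Ω : Type*} [AddCommGroup Ω] [Module ℝ Ω]
    (d ιε ιv Lv Lε : Ω →ₗ[ℝ] Ω) (ω : Ω) (n : ℕ) (hn : 0 < n)
    (hLε : ∀ x, Lε x = ιε (d x) + d (ιε x))
    (hgrade : Lε ω = (n : ℝ) • ω)
    (hclosed : d ω = 0)
    (hLvω : Lv ω = 0)
    (hCartan : ∀ x, d (ιv x) = ιv (d x) - Lv x)
    (hComm : ∀ x, Lv (ιε x) - ιε (Lv x) = - ιv x)
    (hswap : ιε (ιv ω) = ιv (ιε ω)) :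
    d (((n : ℝ) + 1)⁻¹ • ιε (ιv ω)) = ιv ω :=
  hamiltonian_of_homological_vector_field_general d ιε ιv Lv Lε ω n hLε hgrade hclosed hLvω hCartan
    hComm hswap
end

section
/- Let (P, ω) be a symplectic Lie n-algebroid for n > 0, with Weil differential d_W = 𝐝 + L_v, Euler vector field ε, and canonical Hamiltonian π = (1/(n+1))·ι_ε ι_v ω. Then the element cs := (1/n)(ι_ε ω + π) satisfies d_W(cs) = ω, i.e., cs is a Chern-Simons element transgressing ω to the cocycle (1/n)π. -/
/-!
Cartan's formula applied to the closed form `ω` of weight `n` gives `𝐝 (ι_ε ω) = n ω`, and the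
commutator `[L_v, ι_ε] = -ι_v` applied to the `L_v`-closed `ω` gives `L_v (ι_ε ω) = -ι_v ω`.
The latter is exactly cancelled by `𝐝 π = ι_v ω`, while `L_v π = 0`, so
`(𝐝 + L_v)(ι_ε ω + π) = n ω`.
-/

section Transgression

variable {K Ω : Type*} [Field K] [AddCommGroup Ω] [Module K Ω]

theorem map_contract_eq_smul_of_cartan {d ι L : Ω →ₗ[K] Ω} {ω : Ω} {c : K}
    (hcartan : ∀ x, d (ι x) + ι (d x) = L x) (hdω : d ω = 0) (hL : L ω = c • ω) :
    d (ι ω) = c • ω := by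
  simpa [hdω, hL] using hcartan ω

theorem map_contract_eq_neg_of_commutator {Lv ιε ιv : Ω →ₗ[K] Ω} {ω : Ω}
    (hcomm : ∀ x, Lv (ιε x) - ιε (Lv x) = -ιv x) (hLvω : Lv ω = 0) :
    Lv (ιε ω) = -ιv ω := by
  simpa [hLvω] using hcomm ω

theorem weil_differential_inv_smul_eq {d Lv ιv : Ω →ₗ[K] Ω} {ω α π : Ω} {c : K} (hc : c ≠ 0)
    (hdα : d α = c • ω) (hLvα : Lv α = -ιv ω) (hdπ : d π = ιv ω) (hLvπ : Lv π = 0) :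
    d (c⁻¹ • (α + π)) + Lv (c⁻¹ • (α + π)) = ω := by
  simp only [map_smul, map_add, hdα, hLvα, hdπ, hLvπ, add_zero]
  rw [← smul_add, add_neg_cancel_right, smul_smul, inv_mul_cancel₀ hc, one_smul]

end Transgression

/-- For a symplectic Lie n-algebroid (P, ω) with Weil differential d_W = 𝐝 + L_v,
Euler vector field ε and canonical Hamiltonian π (satisfying 𝐝π = ι_v ω, L_v π = 0),
the element cs := (1/n)(ι_ε ω + π) satisfies d_W(cs) = ω, i.e. cs is a
Chern-Simons element transgressing ω to the cocycle (1/n)π. -/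
theorem chern_simons_element_transgresses {Ω : Type*} [AddCommGroup Ω] [Module ℝ Ω]
    (d ιε ιv Lv Lε : Ω →ₗ[ℝ] Ω) (ω π : Ω) (n : ℕ) (hn : 0 < n)
    (hπ : d π = ιv ω)
    (hLvπ : Lv π = 0)
    (hanti : ∀ x, d (ιε x) + ιε (d x) = Lε x)
    (hgrade : Lε ω = (n : ℝ) • ω)
    (hComm : ∀ x, Lv (ιε x) - ιε (Lv x) = - ιv x)
    (hLvω : Lv ω = 0)
    (hdω : d ω = 0) :
    d ((n : ℝ)⁻¹ • (ιε ω + π)) + Lv ((n : ℝ)⁻¹ • (ιε ω + π)) = ω :=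
  weil_differential_inv_smul_eq (Nat.cast_ne_zero.mpr hn.ne')
    (map_contract_eq_smul_of_cartan hanti hdω hgrade)
    (map_contract_eq_neg_of_commutator hComm hLvω) hπ hLvπ
end

section
/- For a symplectic Lie n-algebroid (P, ω) with global Darboux coordinates, the pullback of the canonical Chern-Simons element cs = (1/n)(Σ deg(x^a)·ω_{ab}·x^a ∧ d_W x^b − n·π) along a degree-1 P-valued differential form φ on a closed oriented (n+1)-manifold Σ, integrated over Σ, equals the AKSZ action: ∫_Σ cs(φ) = ∫_Σ ((1/2)·ω_{ab}·φ^a ∧ d φ^b − π(φ)). -/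
/-!
Write `c a b := ω_{ab} ∫ φ^a ∧ dφ^b`. Integrating `d(φ^b ∧ φ^a)` by parts (Stokes, Leibniz, graded
commutativity) produces exactly the sign in the graded symmetry of `ω`, so `c` is symmetric.
Symmetrizing then replaces `deg a` by `(deg a + deg b) / 2 = n / 2` wherever `c a b ≠ 0`, which
turns `(1/n) ∑ deg(x^a) c a b` into `(1/2) ∑ c a b`.
-/

open Finset

theorem two_mul_sum_sum_mul_eq_of_symm {ι R : Type*} [Fintype ι] [CommSemiring R]
    (f : ι → R) (c : ι → ι → R) (N : R) (hc : ∀ a b, c a b = c b a)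
    (hf : ∀ a b, c a b ≠ 0 → f a + f b = N) :
    2 * ∑ a, ∑ b, f a * c a b = N * ∑ a, ∑ b, c a b := by
  have hswap : ∑ a, ∑ b, f a * c a b = ∑ a, ∑ b, f b * c a b := by
    rw [sum_comm]
    simp_rw [hc]
  calc 2 * ∑ a, ∑ b, f a * c a b
      = ∑ a, ∑ b, f a * c a b + ∑ a, ∑ b, f b * c a b := by rw [two_mul, ← hswap]
    _ = ∑ a, ∑ b, (f a + f b) * c a b := by
      simp only [add_mul, sum_add_distrib]
    _ = ∑ a, ∑ b, N * c a b := by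
      refine sum_congr rfl fun a _ => sum_congr rfl fun b _ => ?_
      by_cases h : c a b = 0
      · simp [h]
      · rw [hf a b h]
    _ = N * ∑ a, ∑ b, c a b := by simp only [mul_sum]

theorem integral_wedge_d_swap {R Ω : Type*} [CommRing R] [AddCommGroup Ω] [Module R Ω]
    (w : Ω →ₗ[R] Ω →ₗ[R] Ω) (d : Ω →ₗ[R] Ω) (I : Ω →ₗ[R] R) (hStokes : ∀ η, I (d η) = 0)
    {x y : Ω} {p q : ℕ} (hLeib : d (w y x) = w (d y) x + (-1 : R) ^ q • w y (d x))
    (hcomm : w x (d y) = (-1 : R) ^ (p * (q + 1)) • w (d y) x) :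
    I (w x (d y)) = (-1 : R) ^ ((1 + p) * (1 + q)) * I (w y (d x)) := by
  have hparts : I (w (d y) x) = -((-1 : R) ^ q * I (w y (d x))) := by
    have h := hStokes (w y x)
    rw [hLeib, map_add, map_smul, smul_eq_mul] at h
    linear_combination h
  have hexp : (1 + p) * (1 + q) = p * (q + 1) + q + 1 := by ring
  rw [hcomm, map_smul, smul_eq_mul, hparts, hexp, pow_succ, pow_add]
  ring

theorem mul_eq_mul_swap_of_neg_one_pow_symm {ι R : Type*} [CommRing R] (c F : ι → ι → R)
    (e : ι → ι → ℕ) (hc : ∀ a b, c a b = (-1 : R) ^ e a b * c b a)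
    (hF : ∀ a b, F a b = (-1 : R) ^ e a b * F b a) (a b : ι) :
    c a b * F a b = c b a * F b a := by
  rw [hc, hF, mul_mul_mul_comm, ← pow_add, ← two_mul, pow_mul, neg_one_sq, one_pow, one_mul]

/-- For a symplectic Lie n-algebroid with global Darboux coordinates, the integral
over a closed oriented (n+1)-manifold Σ of the canonical Chern-Simons element
cs(φ) = (1/n)(Σ deg(x^a)·ω_{ab}·φ^a ∧ dφ^b − n·π(φ)) evaluated on a degree-1
P-valued differential form φ (φ^a := φ(x^a), φ(d_W x^a) = dφ^a) equals the AKSZ action: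
∫_Σ cs(φ) = ∫_Σ ((1/2)·ω_{ab}·φ^a ∧ dφ^b − π(φ)). -/
theorem cs_integral_equals_aksz {Ω ι : Type*} [AddCommGroup Ω] [Module ℝ Ω] [Fintype ι]
    (w : Ω →ₗ[ℝ] Ω →ₗ[ℝ] Ω) (d : Ω →ₗ[ℝ] Ω) (I : Ω →ₗ[ℝ] ℝ)
    (deg : ι → ℕ) (ωc : ι → ι → ℝ) (n : ℕ) (hn : 0 < n)
    (φ : ι → Ω) (πφ : Ω)
    (hsym : ∀ a b, ωc a b = (-1 : ℝ) ^ ((1 + deg a) * (1 + deg b)) * ωc b a)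
    (hdeg : ∀ a b, ωc a b ≠ 0 → deg a + deg b = n)
    (hStokes : ∀ η, I (d η) = 0)
    (hLeib : ∀ a b, d (w (φ a) (φ b))
        = w (d (φ a)) (φ b) + (-1 : ℝ) ^ (deg a) • w (φ a) (d (φ b)))
    (hcomm : ∀ a b, w (φ a) (d (φ b))
        = (-1 : ℝ) ^ (deg a * (deg b + 1)) • w (d (φ b)) (φ a)) :
    I ((n : ℝ)⁻¹ • ((∑ a, ∑ b, ((deg a : ℝ) * ωc a b) • w (φ a) (d (φ b))) - (n : ℝ) • πφ))
      = I ((1 / 2 : ℝ) • (∑ a, ∑ b, (ωc a b) • w (φ a) (d (φ b))) - πφ) := by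
  let F : ι → ι → ℝ := fun a b => I (w (φ a) (d (φ b)))
  have hc : ∀ a b, ωc a b * F a b = ωc b a * F b a :=
    mul_eq_mul_swap_of_neg_one_pow_symm ωc F _ hsym
      fun a b => integral_wedge_d_swap w d I hStokes (hLeib b a) (hcomm a b)
  have hweight := two_mul_sum_sum_mul_eq_of_symm (fun a => (deg a : ℝ)) (fun a b => ωc a b * F a b)
    n hc fun a b h => by exact_mod_cast hdeg a b (left_ne_zero_of_mul h)
  have hn' : (n : ℝ) ≠ 0 := by positivity
  simp only [map_sub, map_smul, map_sum, smul_eq_mul, mul_assoc]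
  rw [mul_sub, inv_mul_cancel_left₀ hn', sub_left_inj, inv_mul_eq_iff_eq_mul₀ hn']
  linear_combination hweight / 2
end
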